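/- The map θ ↦ F(U, θ) of the simplified firespread-rate model is nonincreasing on the interval [0, π]: for all 0 ≤ θ₁ ≤ θ₂ ≤ π, F(U, θ₂) ≤ F(U, θ₁). Hence the spread rate is maximal at the head (θ = 0) and minimal at the rear (θ = π). -/

import Mathlib

/-!
On `[0, π/2]` the rate is `ε₀ + c₁ √U cos^n θ`, antitone because `cos` is; on `[π/2, π]` it is
`ε₀ (α + (1 - α) sin θ)`, antitone because `sin` is. Both formulas give `ε₀` at `θ = π/2`
(here `n > 0` makes `cos^n (π/2) = 0`), so the two antitone pieces glue.
-/

open Real Set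

lemma antitoneOn_rpow_cos {n : ℝ} (hn : 0 ≤ n) :
    AntitoneOn (fun θ => cos θ ^ n) (Icc 0 (π / 2)) := by
  intro x hx y hy hxy
  have hπ := pi_pos
  exact rpow_le_rpow (cos_nonneg_of_mem_Icc ⟨by linarith [hy.1], hy.2⟩)
    (antitoneOn_cos ⟨hx.1, by linarith [hx.2]⟩ ⟨hy.1, by linarith [hy.2]⟩ hxy) hn

lemma antitoneOn_sin_Icc_pi_div_two_pi : AntitoneOn sin (Icc (π / 2) π) := by
  intro x hx y hy hxy
  have hπ := pi_pos
  have h := antitoneOn_cos (a := x - π / 2) (b := y - π / 2)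
    ⟨by linarith [hx.1], by linarith [hx.2]⟩ ⟨by linarith [hy.1], by linarith [hy.2]⟩
    (by linarith)
  rwa [cos_sub_pi_div_two, cos_sub_pi_div_two] at h

lemma antitoneOn_add_mul_rpow_cos (a : ℝ) {b n : ℝ} (hb : 0 ≤ b) (hn : 0 ≤ n) :
    AntitoneOn (fun θ => a + b * cos θ ^ n) (Icc 0 (π / 2)) := by
  intro x hx y hy hxy
  dsimp only
  gcongr a + b * ?_
  exact antitoneOn_rpow_cos hn hx hy hxy

lemma antitoneOn_mul_add_mul_sin {a α : ℝ} (ha : 0 ≤ a) (hα : α ≤ 1) :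
    AntitoneOn (fun θ => a * (α + (1 - α) * sin θ)) (Icc (π / 2) π) := by
  intro x hx y hy hxy
  have : 0 ≤ 1 - α := sub_nonneg.2 hα
  dsimp only
  gcongr
  exact antitoneOn_sin_Icc_pi_div_two_pi hx hy hxy

theorem simplified_fire_model_antitone_general
    (ε₀ c₁ n α U : ℝ)
    (hε₀ : 0 ≤ ε₀) (hc₁ : 0 ≤ c₁) (hn : 0 < n) (hα : α ∈ Set.Icc (0 : ℝ) 1)
    (F : ℝ → ℝ)
    (hF : ∀ θ : ℝ, F θ =
      if |θ| ≤ π / 2 then ε₀ + c₁ * Real.sqrt U * Real.cos θ ^ n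
      else ε₀ * (α + (1 - α) * |Real.sin θ|)) :
    AntitoneOn F (Set.Icc 0 π) ∧
    (∀ θ ∈ Set.Icc (0 : ℝ) π, F θ ≤ F 0 ∧ F π ≤ F θ) := by
  have hπ := pi_pos
  have head : AntitoneOn F (Icc 0 (π / 2)) := by
    refine (antitoneOn_add_mul_rpow_cos ε₀ (b := c₁ * √U) (by positivity) hn.le).congr fun θ hθ => ?_
    rw [hF, abs_of_nonneg hθ.1, if_pos hθ.2]
  have rear : AntitoneOn F (Icc (π / 2) π) := by
    refine (antitoneOn_mul_add_mul_sin hε₀ hα.2).congr fun θ hθ => ?_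
    rw [hF, abs_of_nonneg (by linarith [hθ.1])]
    split_ifs with hθ'
    · obtain rfl : θ = π / 2 := le_antisymm hθ' hθ.1
      simp [zero_rpow hn.ne']
    · rw [abs_of_nonneg (sin_nonneg_of_nonneg_of_le_pi (by linarith [hθ.1]) hθ.2)]
  have hF_anti : AntitoneOn F (Icc 0 π) := by
    rw [← Icc_union_Icc_eq_Icc (b := π / 2) (by linarith) (by linarith)]
    exact head.union_right rear (isGreatest_Icc (by linarith)) (isLeast_Icc (by linarith))
  exact ⟨hF_anti, fun θ hθ => ⟨hF_anti ⟨le_rfl, hπ.le⟩ hθ hθ.1, hF_anti hθ ⟨hπ.le, le_rfl⟩ hθ.2⟩⟩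

/-- The simplified firespread rate is nonincreasing on `[0, π]`; hence the
spread rate is maximal at the head (`θ = 0`) and minimal at the rear (`θ = π`). -/
theorem simplified_fire_model_antitone
    (ε₀ c₁ n α U : ℝ)
    (hε₀ : 0 ≤ ε₀) (hc₁ : 0 ≤ c₁) (hn : 0 < n) (hα : α ∈ Set.Icc (0 : ℝ) 1)
    (hU : 0 ≤ U)
    (F : ℝ → ℝ)
    (hF : ∀ θ : ℝ, F θ =
      if |θ| ≤ π / 2 then ε₀ + c₁ * Real.sqrt U * Real.cos θ ^ n
      else ε₀ * (α + (1 - α) * |Real.sin θ|)) :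
    AntitoneOn F (Set.Icc 0 π) ∧
    (∀ θ ∈ Set.Icc (0 : ℝ) π, F θ ≤ F 0 ∧ F π ≤ F θ) :=
  simplified_fire_model_antitone_general ε₀ c₁ n α U hε₀ hc₁ hn hα F hF
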